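/- With the notation above, the connection ∇^J_X Y := ∇^{g_J}_X Y − (1/3) J(∇^{g_J}_X J)(Y) − (1/3) J(∇^{g_J}_Y J)(X) is a symplectic connection: it is torsion-free and satisfies ∇^J ω = 0. -/
import Mathlib


/- STATEMENT 5: The connection
∇^J_X Y := ∇^{g_J}_X Y − (1/3) J(∇^{g_J}_X J)(Y) − (1/3) J(∇^{g_J}_Y J)(X)
is a symplectic connection: torsion-free and ∇^J ω = 0.
Here (∇_X J)Y = D X (J Y) − J (D X Y); closedness of ω is expressed by the
vanishing of the cyclic sum of (∇_X ω)(Y,Z) for the torsion-free D. -/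
theorem nablaJ_is_symplectic_connection
    {M V : Type*} [AddCommGroup V] [Module (M → ℝ) V]
    (act : V → (M → ℝ) → (M → ℝ))
    (bl : V → V → V)
    (ω g : V →ₗ[M → ℝ] V →ₗ[M → ℝ] (M → ℝ))
    (J : V →ₗ[M → ℝ] V)
    (D : V → V → V)
    (hωskew : ∀ X Y, ω X Y = - ω Y X)
    (hJ2 : ∀ X, J (J X) = -X)
    (hωJ : ∀ X Y, ω (J X) (J Y) = ω X Y)
    (hg : ∀ X Y, g X Y = ω X (J Y))
    (hgsym : ∀ X Y, g X Y = g Y X)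
    -- D is the Levi-Civita connection of g_J
    (htorsion : ∀ X Y, D X Y - D Y X = bl X Y)
    (hmetric : ∀ X Y Z, act X (g Y Z) = g (D X Y) Z + g Y (D X Z))
    -- dω = 0 : the cyclic sum of (∇_X ω)(Y,Z) vanishes
    (hdω : ∀ X Y Z,
      (act X (ω Y Z) - ω (D X Y) Z - ω Y (D X Z))
      + (act Y (ω Z X) - ω (D Y Z) X - ω Z (D Y X))
      + (act Z (ω X Y) - ω (D Z X) Y - ω X (D Z Y)) = 0) :
    -- ∇^J is torsion-free and leaves ω parallel
    (∀ X Y,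
      (D X Y - (1/3 : M → ℝ) • J (D X (J Y) - J (D X Y))
             - (1/3 : M → ℝ) • J (D Y (J X) - J (D Y X)))
      - (D Y X - (1/3 : M → ℝ) • J (D Y (J X) - J (D Y X))
               - (1/3 : M → ℝ) • J (D X (J Y) - J (D X Y)))
      = bl X Y) ∧
    (∀ X Y Z,
      act X (ω Y Z)
        = ω (D X Y - (1/3 : M → ℝ) • J (D X (J Y) - J (D X Y))
                   - (1/3 : M → ℝ) • J (D Y (J X) - J (D Y X))) Z
        + ω Y (D X Z - (1/3 : M → ℝ) • J (D X (J Z) - J (D X Z))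
                     - (1/3 : M → ℝ) • J (D Z (J X) - J (D Z X)))) := by
  -- proof below
  -- ω (J u) v = - ω u (J v)
  have hJneg : ∀ u v : V, ω (J u) v = - ω u (J v) := by
    intro u v
    have h := hωJ u (J v)
    rw [hJ2, map_neg] at h
    linear_combination -h
  have h3 : (3 : M → ℝ) * (1/3 : M → ℝ) = 1 := by
    funext m; norm_num [Pi.mul_apply]
  -- key: act X (ω Y Z) in terms of D
  have key : ∀ X Y Z : V, act X (ω Y Z) = ω (D X (J Y)) (J Z) + ω Y (D X Z) := by
    intro X Y Z
    have h := hmetric X (J Y) Z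
    rw [hg (J Y) Z, hωJ, hg, hg, hωJ] at h
    exact h
  -- skew-symmetry of s(X,Y,Z) = ω (D X (J Y)) (J Z) - ω (D X Y) Z in (Y,Z)
  have skewS : ∀ X Y Z : V,
      (ω (D X (J Y)) (J Z) - ω (D X Y) Z) + (ω (D X (J Z)) (J Y) - ω (D X Z) Y) = 0 := by
    intro X Y Z
    have e1 : g (J Y) Z = ω Y Z := by rw [hg, hωJ]
    have e3 : g (-(J Y)) (-Z) = ω Y Z := by
      simp only [map_neg, LinearMap.neg_apply, neg_neg, hg, hωJ]
    have e4 : g (J Z) Y = ω Z Y := by rw [hg, hωJ]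
    have e5 : g (-(J Y)) Z = ω Z Y := by
      simp only [map_neg, LinearMap.neg_apply, hg, hωJ]
      linear_combination -hωskew Y Z
    have e6 : g (J Y) (-Z) = ω Z Y := by
      simp only [hg, map_neg, hωJ]
      linear_combination -hωskew Y Z
    have i1 := hmetric X (J Y) Z
    have i3 := hmetric X (-(J Y)) (-Z)
    have i4 := hmetric X (J Z) Y
    have i5 := hmetric X (-(J Y)) Z
    have i6 := hmetric X (J Y) (-Z)
    rw [e1] at i1
    rw [e3] at i3
    rw [e4] at i4
    rw [e5] at i5
    rw [e6] at i6
    -- rewrite all g's into ω's and push negations out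
    simp only [hg, map_neg, LinearMap.neg_apply] at i1 i3 i4 i5 i6
    -- consequences of equal act values
    have c13 := i1.symm.trans i3
    have c56 := i5.symm.trans i6
    have c45 := i4.symm.trans i5
    -- S + S = 0 where S = ω (D X (J Y)) (J Z) + ω (D X (-(J Y))) (J Z)
    have h2S : (ω (D X (J Y)) (J Z) + ω (D X (-(J Y))) (J Z))
        + (ω (D X (J Y)) (J Z) + ω (D X (-(J Y))) (J Z)) = 0 := by
      linear_combination c13 + c56
    have hS : ω (D X (J Y)) (J Z) + ω (D X (-(J Y))) (J Z) = 0 := by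
      funext m
      have h := congrFun h2S m
      simp only [Pi.add_apply, Pi.zero_apply] at h ⊢
      linarith
    linear_combination c45 + hS - hωJ Y (D X Z) - hωJ Z (D X Y)
      - hωskew (D X Y) Z - hωskew Y (D X Z)
  -- cyclic identity from dω = 0
  have cyc : ∀ X Y Z : V,
      (ω (D X (J Y)) (J Z) - ω (D X Y) Z)
      + (ω (D Y (J Z)) (J X) - ω (D Y Z) X)
      + (ω (D Z (J X)) (J Y) - ω (D Z X) Y) = 0 := by
    intro X Y Z
    have h := hdω X Y Z
    rw [key X Y Z, key Y Z X, key Z X Y] at h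
    linear_combination h
  constructor
  · intro X Y
    rw [← htorsion X Y]
    abel
  · intro X Y Z
    rw [key X Y Z]
    simp only [map_sub, map_smul, LinearMap.sub_apply, LinearMap.smul_apply, hJ2,
      LinearMap.map_smulₛₗ, smul_eq_mul, map_neg, LinearMap.neg_apply, sub_neg_eq_add,
      map_add, LinearMap.add_apply]
    linear_combination (1/3 : M → ℝ) * (skewS X Y Z) - (1/3 : M → ℝ) * (skewS Y Z X)
      + (1/3 : M → ℝ) * (cyc X Y Z)
      - (ω (D X (J Y)) (J Z) - ω (D X Y) Z) * h3
      + (1/3 : M → ℝ) * (hJneg (D X (J Y)) Z)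
      + (1/3 : M → ℝ) * (hJneg (D Y (J X)) Z)
      + (1/3 : M → ℝ) * (hJneg Y (D X (J Z)))
      + (1/3 : M → ℝ) * (hJneg Y (D Z (J X)))
      - (1/3 : M → ℝ) * (hωskew (D X (J Z)) (J Y))
      - (1/3 : M → ℝ) * (hωskew (D Z (J X)) (J Y))
      + (1/3 : M → ℝ) * (hωskew Y (D X Z))
      + (1/3 : M → ℝ) * (hωskew Y (D Z X))
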